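/- Let l ∈ ℤ, let k ∈ ℕ, and let f : ℍ → ℂ be holomorphic. Then for all τ = x+iy ∈ ℍ, R_l^k(f)(τ) = Σ_{r=0}^k (−1)^{k−r} · C(k,r) · (l+r)_{k−r} · (4πy)^{r−k} · f^{(r)}(τ), where (a)_m := a(a+1)⋯(a+m−1) is the Pochhammer symbol and C(k,r) the binomial coefficient. -/

import Mathlib

/-!
Induction on `k`. Put `Y = 4π Im τ`; since `∂Y/∂τ = -2πi` and `τ - τ̄ = 2i Im τ = iY/(2π)`, for
holomorphic `g` one gets `R_w (Y^m g) = Y^m g^{(1)} - (w + m) Y^{m-1} g`. Raising the expansion of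
`R_l^k f` termwise with `w = l + 2k`, `m = r - k` shows that its coefficients obey
`a_{k+1,r+1} = a_{k,r} - (l + k + r + 1) a_{k,r+1}`, and the closed form satisfies this by
Pascal's rule together with `(r + 1) C(k, r + 1) = (k - r) C(k, r)`.
-/

noncomputable section

open Complex Real

/-- The upper half-plane, as a subset of `ℂ`. -/
def UHP : Set ℂ := {z : ℂ | 0 < z.im}

/-- `e(z) = exp(2πiz)`. -/
def e (z : ℂ) : ℂ := Complex.exp (2 * (π : ℂ) * I * z)

/-- The Wirtinger derivative `∂f/∂τ = (1/2)(∂f/∂x − i ∂f/∂y)`. -/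
def dtau (f : ℂ → ℂ) (z : ℂ) : ℂ := (fderiv ℝ f z 1 - I * fderiv ℝ f z I) / 2

/-- The raising operator `R_w f = (1/(2πi)) (∂f/∂τ + w f/(τ − τ̄))`. -/
def Rop (w : ℤ) (f : ℂ → ℂ) : ℂ → ℂ :=
  fun z => (1 / (2 * (π : ℂ) * I)) * (dtau f z + (w : ℂ) * f z / (z - (starRingEnd ℂ) z))

/-- Iterated raising operator: `R_w^0 = id`, `R_w^{n+1} = R_{w+2n} ∘ R_w^n`. -/
def Riter (w : ℤ) : ℕ → (ℂ → ℂ) → (ℂ → ℂ)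
  | 0 => fun f => f
  | n + 1 => fun f => Rop (w + 2 * n) (Riter w n f)

/-- Normalized derivative `f^{(r)} = (2πi)^{−r} d^r f/dτ^r`. -/
def fder (r : ℕ) (f : ℂ → ℂ) : ℂ → ℂ :=
  fun z => ((2 * (π : ℂ) * I) ^ r)⁻¹ * iteratedDeriv r f z

/-- The Rankin–Cohen bracket of `f` and `g` with weight parameters `k`, `l`:
`[f,g]_r = Σ_{s=0}^r (−1)^s C(k+r−1,s) C(l+r−1,r−s) f^{(r−s)} g^{(s)}`. -/
def RCbracket (k l r : ℕ) (f g : ℂ → ℂ) : ℂ → ℂ :=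
  fun z => ∑ s ∈ Finset.range (r + 1),
    (-1 : ℂ) ^ s * (Nat.choose (k + r - 1) s : ℂ) * (Nat.choose (l + r - 1) (r - s) : ℂ) *
      fder (r - s) f z * fder s g z

open Filter Topology Finset

lemma isOpen_UHP : IsOpen UHP := isOpen_lt continuous_const Complex.continuous_im

section Wirtinger

variable {f g : ℂ → ℂ} {z : ℂ}

lemma dtau_congr (h : f =ᶠ[𝓝 z] g) : dtau f z = dtau g z := by
  simp only [dtau, h.fderiv_eq]

lemma dtau_eq_deriv (hf : DifferentiableAt ℂ f z) : dtau f z = deriv f z := by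
  have hR : fderiv ℝ f z = (fderiv ℂ f z).restrictScalars ℝ :=
    (hf.hasFDerivAt.restrictScalars ℝ).fderiv
  have hI : fderiv ℂ f z I = I * deriv f z := by
    rw [← fderiv_apply_one_eq_deriv, ← smul_eq_mul, ← map_smul, smul_eq_mul, mul_one]
  simp only [dtau, hR, ContinuousLinearMap.coe_restrictScalars', fderiv_apply_one_eq_deriv, hI]
  linear_combination (-deriv f z / 2) * I_sq

lemma dtau_const_mul (c : ℂ) (hf : DifferentiableAt ℝ f z) :
    dtau (fun u => c * f u) z = c * dtau f z := by
  simp only [dtau, fderiv_const_mul hf c, smul_apply, smul_eq_mul]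
  ring

lemma dtau_mul (hf : DifferentiableAt ℝ f z) (hg : DifferentiableAt ℝ g z) :
    dtau (fun u => f u * g u) z = dtau f z * g z + f z * dtau g z := by
  simp only [dtau, fderiv_fun_mul hf hg, add_apply, smul_apply, smul_eq_mul]
  ring

lemma dtau_sum {ι : Type*} {s : Finset ι} {F : ι → ℂ → ℂ}
    (h : ∀ i ∈ s, DifferentiableAt ℝ (F i) z) :
    dtau (fun u => ∑ i ∈ s, F i u) z = ∑ i ∈ s, dtau (F i) z := by
  simp only [dtau, fderiv_fun_sum h, _root_.sum_apply, Finset.mul_sum,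
    ← Finset.sum_sub_distrib, Finset.sum_div]

lemma hasFDerivAt_mul_im_zpow (a : ℂ) (m : ℤ) (hz : a * z.im ≠ 0) :
    HasFDerivAt (fun u : ℂ => (a * u.im) ^ m)
      (((m : ℂ) * (a * z.im) ^ (m - 1) * a) • (ofRealCLM.comp imCLM : ℂ →L[ℝ] ℂ)) z := by
  have hlin : HasFDerivAt (fun u : ℂ => a * u.im) (a • (ofRealCLM.comp imCLM : ℂ →L[ℝ] ℂ)) z :=
    ((ofRealCLM.comp imCLM).hasFDerivAt).const_smul a
  have h := (hasDerivAt_zpow m _ (Or.inl hz)).comp_hasFDerivAt z hlin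
  rw [smul_smul] at h
  exact h

lemma dtau_mul_im_zpow (a : ℂ) (m : ℤ) (hz : a * z.im ≠ 0) :
    dtau (fun u : ℂ => (a * u.im) ^ m) z = -(I / 2) * a * m * (a * z.im) ^ (m - 1) := by
  simp only [dtau, (hasFDerivAt_mul_im_zpow a m hz).fderiv, smul_apply,
    ContinuousLinearMap.comp_apply, imCLM_apply, ofRealCLM_apply, one_im, I_im, ofReal_zero,
    ofReal_one, smul_eq_mul]
  ring

end Wirtinger

lemma AnalyticAt.iteratedDeriv {𝕜 E : Type*} [NontriviallyNormedField 𝕜] [NormedAddCommGroup E]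
    [NormedSpace 𝕜 E] [CompleteSpace E] {f : 𝕜 → E} {x : 𝕜} (hf : AnalyticAt 𝕜 f x) (r : ℕ) :
    AnalyticAt 𝕜 (iteratedDeriv r f) x := by
  rw [iteratedDeriv_eq_iterate]
  exact hf.iterated_deriv r

section Raising

variable {f g : ℂ → ℂ} {z : ℂ}

lemma Rop_congr (w : ℤ) (h : f =ᶠ[𝓝 z] g) : Rop w f z = Rop w g z := by
  simp only [Rop, dtau_congr h, h.eq_of_nhds]

lemma Rop_sum (w : ℤ) {ι : Type*} {s : Finset ι} {F : ι → ℂ → ℂ}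
    (h : ∀ i ∈ s, DifferentiableAt ℝ (F i) z) :
    Rop w (fun u => ∑ i ∈ s, F i u) z = ∑ i ∈ s, Rop w (F i) z := by
  simp only [Rop, dtau_sum h, Finset.mul_sum, Finset.sum_div, ← Finset.sum_add_distrib]

lemma Rop_const_mul_im_zpow_mul (w m : ℤ) (c : ℂ) (hg : DifferentiableAt ℂ g z) (hz : z.im ≠ 0) :
    Rop w (fun u => c * (4 * (π : ℂ) * (u.im : ℂ)) ^ m * g u) z
      = c * ((4 * (π : ℂ) * (z.im : ℂ)) ^ m * (deriv g z / (2 * (π : ℂ) * I))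
          - (w + m) * (4 * (π : ℂ) * (z.im : ℂ)) ^ (m - 1) * g z) := by
  rw [Rop]
  set Y : ℂ := 4 * (π : ℂ) * (z.im : ℂ)
  have hY : Y ≠ 0 := by simp [Y, Real.pi_ne_zero, hz]
  have hpow : DifferentiableAt ℝ (fun u : ℂ => (4 * (π : ℂ) * u.im) ^ m) z :=
    (hasFDerivAt_mul_im_zpow _ m hY).differentiableAt
  have hgR : DifferentiableAt ℝ g z := hg.restrictScalars ℝ
  have hdtau : dtau (fun u => c * (4 * (π : ℂ) * (u.im : ℂ)) ^ m * g u) z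
      = c * (-(I / 2) * (4 * π) * m * Y ^ (m - 1) * g z + Y ^ m * deriv g z) := by
    simp_rw [mul_assoc c]
    rw [dtau_const_mul c (hpow.fun_mul hgR), dtau_mul hpow hgR, dtau_mul_im_zpow _ m hY,
      dtau_eq_deriv hg]
  have hconj : z - (starRingEnd ℂ) z = Y * I / (2 * π) := by
    rw [Complex.sub_conj]; push_cast; field_simp; ring
  rw [hdtau, hconj]
  clear_value Y
  rw [zpow_sub_one₀ hY]
  field_simp
  linear_combination (4 * π * c * g z * w) * I_sq

lemma differentiableAt_fder (hf : AnalyticAt ℂ f z) (r : ℕ) : DifferentiableAt ℂ (fder r f) z :=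
  (hf.iteratedDeriv r).differentiableAt.const_mul _

lemma deriv_fder (hf : AnalyticAt ℂ f z) (r : ℕ) :
    deriv (fder r f) z = 2 * (π : ℂ) * I * fder (r + 1) f z := by
  change deriv (fun u => _ * iteratedDeriv r f u) z = _
  rw [deriv_const_mul _ (hf.iteratedDeriv r).differentiableAt, fder, ← iteratedDeriv_succ,
    pow_succ, mul_inv]
  field_simp [two_pi_I_ne_zero]

end Raising

section Coefficients

/-- The coefficient `(-1)^{k-r} C(k,r) (l+r)_{k-r}` of `(4πy)^{r-k} f^{(r)}` in `R_l^k f`. -/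
def raisingCoeff (l : ℤ) (k r : ℕ) : ℂ :=
  (-1 : ℂ) ^ (k - r) * (Nat.choose k r : ℂ) * ∏ i ∈ range (k - r), ((l : ℂ) + r + i)

variable (l : ℤ) (k : ℕ)

lemma raisingCoeff_of_lt {r : ℕ} (h : k < r) : raisingCoeff l k r = 0 := by
  simp [raisingCoeff, Nat.choose_eq_zero_of_lt h]

lemma raisingCoeff_succ_zero : raisingCoeff l (k + 1) 0 = -(l + k) * raisingCoeff l k 0 := by
  simp only [raisingCoeff, Nat.sub_zero, Nat.choose_zero_right, prod_range_succ, pow_succ]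
  push_cast
  ring

lemma raisingCoeff_succ_succ (r : ℕ) :
    raisingCoeff l (k + 1) (r + 1)
      = raisingCoeff l k r - (l + k + r + 1) * raisingCoeff l k (r + 1) := by
  rcases lt_trichotomy k r with hkr | rfl | hrk
  · rw [raisingCoeff_of_lt l k hkr, raisingCoeff_of_lt l k (by omega),
      raisingCoeff_of_lt l (k + 1) (by omega), mul_zero, sub_zero]
  · simp [raisingCoeff]
  obtain ⟨t, rfl⟩ : ∃ t, k = r + t + 1 := ⟨k - r - 1, by omega⟩
  have hprod : ∏ i ∈ range (t + 1), ((l : ℂ) + r + i)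
      = (l + r) * ∏ i ∈ range t, ((l : ℂ) + (r + 1) + i) := by
    rw [prod_range_succ', mul_comm]
    push_cast
    rw [add_zero]
    congr 1
    exact prod_congr rfl fun i _ => by ring
  have hpascal := Nat.choose_succ_succ' (r + t + 1) r
  have hsymm : ((r + t + 1).choose (r + 1) : ℂ) * (r + 1) = (r + t + 1).choose r * (t + 1) := by
    have := Nat.choose_succ_right_eq (r + t + 1) r
    rw [show r + t + 1 - r = t + 1 by omega] at this
    exact_mod_cast this
  simp only [raisingCoeff, show r + t + 1 + 1 - (r + 1) = t + 1 by omega,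
    show r + t + 1 - r = t + 1 by omega, show r + t + 1 - (r + 1) = t by omega, hpascal]
  rw [hprod, prod_range_succ]
  push_cast
  linear_combination (-1 : ℂ) ^ t * (∏ i ∈ range t, ((l : ℂ) + (r + 1) + i)) * hsymm

/-- The left-hand side is what `R_{l+2k}` does, term by term, to `∑ r, a_{k,r} Y^{r-k} F_r`
when `Y = 4π Im z` and `F_r = f^{(r)}(z)`. -/
lemma sum_raisingCoeff_succ (Y : ℂ) (F : ℕ → ℂ) :
    ∑ r ∈ range (k + 1), raisingCoeff l k r *
        (Y ^ ((r : ℤ) - k) * F (r + 1) - (l + k + r) * Y ^ ((r : ℤ) - k - 1) * F r)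
      = ∑ r ∈ range (k + 1 + 1), raisingCoeff l (k + 1) r * Y ^ ((r : ℤ) - (k + 1 : ℕ)) * F r := by
  have hlower :
      ∑ r ∈ range (k + 1), raisingCoeff l k r * ((l + k + r) * Y ^ ((r : ℤ) - k - 1) * F r)
        = ∑ r ∈ range (k + 1),
            (l + k + r + 1) * raisingCoeff l k (r + 1) * Y ^ ((r : ℤ) - k) * F (r + 1)
          + (l + k) * raisingCoeff l k 0 * Y ^ (-(k : ℤ) - 1) * F 0 := by
    rw [sum_range_succ', sum_range_succ _ k, raisingCoeff_of_lt l k (Nat.lt_succ_self k),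
      mul_zero, zero_mul, zero_mul, add_zero]
    congr 1
    · refine sum_congr rfl fun r _ => ?_
      push_cast
      rw [show (r : ℤ) + 1 - k - 1 = r - k by ring]
      ring
    · push_cast
      ring_nf
  have hshift : ∀ r : ℕ, ((r + 1 : ℕ) : ℤ) - (k + 1 : ℕ) = r - k := fun r => by push_cast; ring
  have hsum : ∑ r ∈ range (k + 1), (raisingCoeff l k r * (Y ^ ((r : ℤ) - k) * F (r + 1))
        - (l + k + r + 1) * raisingCoeff l k (r + 1) * Y ^ ((r : ℤ) - k) * F (r + 1))
      = ∑ r ∈ range (k + 1), raisingCoeff l (k + 1) (r + 1) * Y ^ ((r : ℤ) - k) * F (r + 1) :=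
    sum_congr rfl fun r _ => by rw [raisingCoeff_succ_succ]; ring
  rw [sum_range_succ' _ (k + 1), raisingCoeff_succ_zero]
  simp only [mul_sub, sum_sub_distrib, hlower, hshift,
    show ((0 : ℕ) : ℤ) - (k + 1 : ℕ) = -(k : ℤ) - 1 by push_cast; ring]
  rw [sum_sub_distrib] at hsum
  linear_combination hsum

def raisingExpansion (l : ℤ) (k : ℕ) (f : ℂ → ℂ) (z : ℂ) : ℂ :=
  ∑ r ∈ range (k + 1),
    raisingCoeff l k r * (4 * (π : ℂ) * (z.im : ℂ)) ^ ((r : ℤ) - (k : ℤ)) * fder r f z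

lemma Rop_raisingExpansion (l : ℤ) (k : ℕ) {f : ℂ → ℂ} {z : ℂ} (hf : AnalyticAt ℂ f z)
    (hz : z.im ≠ 0) :
    Rop (l + 2 * k) (raisingExpansion l k f) z = raisingExpansion l (k + 1) f z := by
  have hY : 4 * (π : ℂ) * z.im ≠ 0 := by simp [Real.pi_ne_zero, hz]
  have hdiff : ∀ r ∈ range (k + 1), DifferentiableAt ℝ
      (fun u => raisingCoeff l k r * (4 * (π : ℂ) * (u.im : ℂ)) ^ ((r : ℤ) - k) * fder r f u) z :=
    fun r _ => ((hasFDerivAt_mul_im_zpow _ _ hY).differentiableAt.const_mul _).mul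
      ((differentiableAt_fder hf r).restrictScalars ℝ)
  have hterm : ∀ r ∈ range (k + 1), Rop (l + 2 * k)
      (fun u => raisingCoeff l k r * (4 * (π : ℂ) * (u.im : ℂ)) ^ ((r : ℤ) - k) * fder r f u) z
      = raisingCoeff l k r * ((4 * (π : ℂ) * (z.im : ℂ)) ^ ((r : ℤ) - k) * fder (r + 1) f z
          - (l + k + r) * (4 * (π : ℂ) * (z.im : ℂ)) ^ ((r : ℤ) - k - 1) * fder r f z) :=
    fun r _ => by
      rw [Rop_const_mul_im_zpow_mul _ _ _ (differentiableAt_fder hf r) hz, deriv_fder hf,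
        mul_div_cancel_left₀ _ two_pi_I_ne_zero]
      push_cast
      ring_nf
  unfold raisingExpansion
  rw [Rop_sum _ hdiff, sum_congr rfl hterm]
  exact sum_raisingCoeff_succ l k _ (fun r => fder r f z)

/-- equation (56): for `l ∈ ℤ`, `k ∈ ℕ` and holomorphic `f` on `ℍ`,
`R_l^k(f) = Σ_{r=0}^k (−1)^{k−r} C(k,r) (l+r)_{k−r} (4πy)^{r−k} f^{(r)}`,
with `(a)_m` the Pochhammer symbol. -/
theorem stmt11 (l : ℤ) (k : ℕ) (f : ℂ → ℂ) (hf : DifferentiableOn ℂ f UHP) :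
    ∀ τ ∈ UHP,
      Riter l k f τ
        = ∑ r ∈ Finset.range (k + 1),
            (-1 : ℂ) ^ (k - r) * (Nat.choose k r : ℂ) *
              (∏ i ∈ Finset.range (k - r), (((l : ℂ) + (r : ℂ)) + (i : ℂ))) *
              (4 * (π : ℂ) * (τ.im : ℂ)) ^ ((r : ℤ) - (k : ℤ)) * fder r f τ := by
  have hana := hf.analyticOnNhd isOpen_UHP
  change ∀ τ ∈ UHP, Riter l k f τ = raisingExpansion l k f τ
  induction k with
  | zero => simp [Riter, raisingExpansion, raisingCoeff, fder]
  | succ k ih =>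
    intro τ hτ
    calc Riter l (k + 1) f τ = Rop (l + 2 * k) (Riter l k f) τ := rfl
      _ = Rop (l + 2 * k) (raisingExpansion l k f) τ :=
        Rop_congr _ (eventuallyEq_of_mem (isOpen_UHP.mem_nhds hτ) ih)
      _ = raisingExpansion l (k + 1) f τ := Rop_raisingExpansion l k (hana τ hτ) hτ.ne'
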